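/- Let Â(·) over V̂ = V ∪ {ω} be defined by â_ij = a_ij for i,j ∈ V, â_iω = d_i where d_i(t) = Σ_{k∈V_L} b_ik(t), and â_ωj = 0 for all j ∈ V̂. If Â(·) satisfies the uniform local integrability assumption and is aperiodically quasi-strongly connected (AQSC), then for every h̄ ≥ 0 and all measurable delays h_ij(t) ∈ [0,h̄], the containment control algorithm provides containment: for every dimension m ≥ 1, every fixed leader positions x_k ∈ ℝ^m (k ∈ V_L) and every solution, dist(x_i(t), conv{x_k : k ∈ V_L}) → 0 as t → ∞ for all followers i ∈ V. -/

import Mathlib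

open MeasureTheory Filter Topology Set

/-- There is a root node connected to every node by a directed walk. -/
def QSCrel {α : Type*} (r : α → α → Prop) : Prop :=
  ∃ root : α, ∀ i : α, Relation.ReflTransGen r root i

/-- The graph of the nonnegative matrix `B` (arc `(j,i)` iff `B i j > 0`), with all
entries smaller than `ε` zeroed out, is quasi-strongly connected. -/
def QSCeps {V : Type*} (ε : ℝ) (B : V → V → ℝ) : Prop :=
  QSCrel (fun u v : V => ε ≤ B v u)

variable {V : Type*} [Fintype V] [DecidableEq V]

/-- An increasing sequence of times tending to infinity, starting in `[0,∞)`. -/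
def IncrSeq (tp : ℕ → ℝ) : Prop :=
  StrictMono tp ∧ Tendsto tp atTop atTop ∧ 0 ≤ tp 0

/-- `(t_p)`-boundedness of the matrix function `A(⬝) = (a i j ⬝)`. -/
def tpBounded (a : V → V → ℝ → ℝ) (tp : ℕ → ℝ) : Prop :=
  ∃ L : ℝ, ∀ p : ℕ, ∀ i j : V, i ≠ j → (∫ s in (tp p)..(tp (p+1)), a i j s) ≤ L

/-- Aperiodic quasi-strong connectivity. -/
def AQSC (a : V → V → ℝ → ℝ) : Prop :=
  ∃ ε > (0:ℝ), ∃ tp : ℕ → ℝ, IncrSeq tp ∧ tpBounded a tp ∧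
    ∀ p : ℕ, QSCeps ε (fun i j => ∫ s in (tp p)..(tp (p+1)), a i j s)

/-- Non-instantaneous type-symmetry. -/
def NITS (a : V → V → ℝ → ℝ) : Prop :=
  ∃ K ≥ (1:ℝ), ∃ tp : ℕ → ℝ, IncrSeq tp ∧ tpBounded a tp ∧
    ∀ p : ℕ, ∀ i j : V,
      (1/K) * (∫ s in (tp p)..(tp (p+1)), a j i s) ≤ (∫ s in (tp p)..(tp (p+1)), a i j s) ∧
      (∫ s in (tp p)..(tp (p+1)), a i j s) ≤ K * (∫ s in (tp p)..(tp (p+1)), a j i s)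

/-- Uniform local integrability of the weights. -/
def ULI (a : V → V → ℝ → ℝ) : Prop :=
  ∀ D > (0:ℝ), ∃ M : ℝ, ∀ t ≥ (0:ℝ), ∀ i j : V, i ≠ j → (∫ s in t..(t+D), a i j s) ≤ M

/-- Admissible weights: measurable, nonnegative, locally integrable. -/
def Weights (a : V → V → ℝ → ℝ) : Prop :=
  ∀ i j : V, i ≠ j → Measurable (a i j) ∧ (∀ t ≥ (0:ℝ), 0 ≤ a i j t) ∧
    ∀ T : ℝ, IntegrableOn (a i j) (Icc 0 T)

/-- Admissible delays: measurable with values in `[0, h̄]`. -/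
def Delays (h : V → V → ℝ → ℝ) (hbar : ℝ) : Prop :=
  ∀ i j : V, Measurable (h i j) ∧ ∀ t ≥ (0:ℝ), h i j t ∈ Icc (0:ℝ) hbar

/-- Right-hand side of the delayed averaging dynamics. -/
def rhs (a h : V → V → ℝ → ℝ) (x : ℝ → V → ℝ) (i : V) (s : ℝ) : ℝ :=
  ∑ j ∈ Finset.univ.erase i, a i j s * (x (s - h i j s) j - x s i)

/-- A solution of the continuous-time delayed averaging algorithm with starting time `tstar`. -/
def IsSol (a h : V → V → ℝ → ℝ) (hbar tstar : ℝ) (x : ℝ → V → ℝ) : Prop :=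
  (∀ i : V, AEStronglyMeasurable (fun s => x s i) (volume.restrict (Icc (tstar - hbar) tstar))) ∧
  (∃ M : ℝ, ∀ s ∈ Icc (tstar - hbar) tstar, ∀ i : V, |x s i| ≤ M) ∧
  ∀ i : V, ∀ t ≥ tstar,
    IntervalIntegrable (rhs a h x i) volume tstar t ∧
    x t i = x tstar i + ∫ s in tstar..t, rhs a h x i s

/-- `Λ(t)`: supremum of the values over the window `[t-h̄, t]`. -/
noncomputable def Lam (hbar : ℝ) (x : ℝ → V → ℝ) (t : ℝ) : ℝ :=
  sSup {v | ∃ s ∈ Icc (t - hbar) t, ∃ i : V, x s i = v}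

/-- `λ(t)`: infimum of the values over the window `[t-h̄, t]`. -/
noncomputable def lam (hbar : ℝ) (x : ℝ → V → ℝ) (t : ℝ) : ℝ :=
  sInf {v | ∃ s ∈ Icc (t - hbar) t, ∃ i : V, x s i = v}

/-- Arc `(j,i)` of the persistent graph: `∫₀^∞ a i j = ∞`. -/
def PArc (a : V → V → ℝ → ℝ) (j i : V) : Prop :=
  j ≠ i ∧ (∫⁻ t in Ioi (0:ℝ), ENNReal.ofReal (a i j t)) = ⊤

/-- `i` and `j` are joined by a walk in the persistent graph. -/
def JoinedG (a : V → V → ℝ → ℝ) (i j : V) : Prop :=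
  Relation.ReflTransGen (fun u v => PArc a u v) i j

/-- Admissible damping gains. -/
def Gains (d : V → ℝ → ℝ) : Prop :=
  ∀ i : V, Measurable (d i) ∧ (∀ t ≥ (0:ℝ), 0 ≤ d i t) ∧
    ∀ T : ℝ, IntegrableOn (d i) (Icc 0 T)

/-- Right-hand side of the damped averaging dynamics. -/
def rhsDamp (a h : V → V → ℝ → ℝ) (d : V → ℝ → ℝ) (x : ℝ → V → ℝ) (i : V) (s : ℝ) : ℝ :=
  -(d i s * x s i) + ∑ j ∈ Finset.univ.erase i, a i j s * (x (s - h i j s) j - x s i)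

/-- A solution of the damped averaging dynamics. -/
def IsSolDamp (a h : V → V → ℝ → ℝ) (d : V → ℝ → ℝ) (hbar tstar : ℝ) (x : ℝ → V → ℝ) : Prop :=
  (∀ i : V, AEStronglyMeasurable (fun s => x s i) (volume.restrict (Icc (tstar - hbar) tstar))) ∧
  (∃ M : ℝ, ∀ s ∈ Icc (tstar - hbar) tstar, ∀ i : V, |x s i| ≤ M) ∧
  ∀ i : V, ∀ t ≥ tstar,
    IntervalIntegrable (rhsDamp a h d x i) volume tstar t ∧
    x t i = x tstar i + ∫ s in tstar..t, rhsDamp a h d x i s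

/-- The augmented matrix function over `V ∪ {ω}` (with `ω = none`). -/
def Ahat {V : Type*} (a : V → V → ℝ → ℝ) (d : V → ℝ → ℝ) :
    Option V → Option V → ℝ → ℝ
  | some i, some j => a i j
  | some i, none => d i
  | none, _ => fun _ => 0

variable {W : Type*} [Fintype W]

/-- Admissible attraction gains towards the leaders. -/
def BGains (b : V → W → ℝ → ℝ) : Prop :=
  ∀ i : V, ∀ k : W, Measurable (b i k) ∧ (∀ t ≥ (0:ℝ), 0 ≤ b i k t) ∧
    ∀ T : ℝ, IntegrableOn (b i k) (Icc 0 T)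

/-- Right-hand side of the containment-control dynamics with fixed leader positions `xL`. -/
noncomputable def rhsCont (m : ℕ) (a h : V → V → ℝ → ℝ) (b : V → W → ℝ → ℝ)
    (xL : W → EuclideanSpace ℝ (Fin m)) (x : ℝ → V → EuclideanSpace ℝ (Fin m))
    (i : V) (s : ℝ) : EuclideanSpace ℝ (Fin m) :=
  (∑ j ∈ Finset.univ.erase i, a i j s • (x (s - h i j s) j - x s i)) +
    ∑ k : W, b i k s • (xL k - x s i)

/-- A solution of the containment-control dynamics. -/
def IsSolCont (m : ℕ) (a h : V → V → ℝ → ℝ) (b : V → W → ℝ → ℝ)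
    (xL : W → EuclideanSpace ℝ (Fin m)) (hbar tstar : ℝ)
    (x : ℝ → V → EuclideanSpace ℝ (Fin m)) : Prop :=
  (∀ i : V, AEStronglyMeasurable (fun s => x s i) (volume.restrict (Icc (tstar - hbar) tstar))) ∧
  (∃ M : ℝ, ∀ s ∈ Icc (tstar - hbar) tstar, ∀ i : V, ‖x s i‖ ≤ M) ∧
  ∀ i : V, ∀ t ≥ tstar,
    IntervalIntegrable (rhsCont m a h b xL x i) volume tstar t ∧
    x t i = x tstar i + ∫ s in tstar..t, rhsCont m a h b xL x i s

/-!
Fix a direction `e` with `‖e‖ ≤ 1` and let `z i t = ⟪e, x t i⟫ - max_k ⟪e, xL k⟫` be the excess of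
follower `i` over the supporting half-space of the leaders, with `z ω = 0` for the virtual leader
node `ω`. Along the dynamics `z i' ≤ ∑_{j ≠ i} â i j * (z j (t - h i j) - z i)` on the augmented
graph, and `dist (x t i) (conv xL) ≤ z i t` for a suitable `e`.

For this scalar delayed system an upper bound `B ≥ 0` holding on one delay window holds forever
(a maximum principle), and the integrating factor `exp ∫ ∑_j â i j` shows that a node lying a
margin `g` below `B` stays `exp (-P) * g` below it, while a node receiving an `ε`-heavy arc from
such a node acquires a margin `ε * exp (-P) * g`, where `P` bounds the row integrals. In every
window the graph is quasi-strongly connected and its root must be `ω`, since no arc enters `ω`;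
so some arc leaves the set of nodes already below the level, and after `|V|` suitably spaced
windows every node lies below `(1 - δ) * B`. The spacing and `P` depend only on the data, by
`(t_p)`-boundedness and uniform local integrability, so the excess decays geometrically,
uniformly in `e`.
-/

theorem LipschitzOnWith.comp_absolutelyContinuousOnInterval {X Y : Type*} [PseudoMetricSpace X]
    [PseudoMetricSpace Y] {g : X → Y} {f : ℝ → X} {K : NNReal} {s : Set X} {a b : ℝ}
    (hg : LipschitzOnWith K g s) (hf : AbsolutelyContinuousOnInterval f a b)
    (hfs : MapsTo f (uIcc a b) s) : AbsolutelyContinuousOnInterval (g ∘ f) a b := by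
  rw [absolutelyContinuousOnInterval_iff] at hf ⊢
  intro ε hε
  obtain ⟨δ, hδ, hfδ⟩ := hf (ε / (K + 1)) (by positivity)
  refine ⟨δ, hδ, fun E hE hEδ => ?_⟩
  calc ∑ i ∈ Finset.range E.1, dist (g (f (E.2 i).1)) (g (f (E.2 i).2))
      ≤ ∑ i ∈ Finset.range E.1, K * dist (f (E.2 i).1) (f (E.2 i).2) := by
        gcongr with i hi
        exact hg.dist_le_mul _ (hfs (hE.1 i hi).1) _ (hfs (hE.1 i hi).2)
    _ = K * ∑ i ∈ Finset.range E.1, dist (f (E.2 i).1) (f (E.2 i).2) := by rw [Finset.mul_sum]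
    _ ≤ K * (ε / (K + 1)) := by gcongr; exact (hfδ E hE hEδ).le
    _ < ε := by
        rw [mul_div_assoc', div_lt_iff₀ (by positivity)]
        nlinarith

theorem AbsolutelyContinuousOnInterval.exp {f : ℝ → ℝ} {a b : ℝ}
    (hf : AbsolutelyContinuousOnInterval f a b) :
    AbsolutelyContinuousOnInterval (fun t => Real.exp (f t)) a b := by
  obtain ⟨R, hR⟩ := hf.exists_bound
  obtain ⟨K, hK⟩ := (Real.contDiff_exp.locallyLipschitz.locallyLipschitzOn (s := Icc (-R) R))
    |>.exists_lipschitzOnWith_of_compact isCompact_Icc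
  exact hK.comp_absolutelyContinuousOnInterval hf fun t ht => abs_le.1 (hR t ht)

theorem exp_neg_integral_mul_le_sub {y u c β : ℝ → ℝ} {σ τ B G : ℝ} (hστ : σ ≤ τ)
    (hy : ∀ t ∈ Icc σ τ, y t = y σ + ∫ s in σ..t, u s)
    (hu : IntervalIntegrable u volume σ τ) (hc : IntervalIntegrable c volume σ τ)
    (hβ : IntervalIntegrable β volume σ τ)
    (hc0 : ∀ s ∈ Icc σ τ, 0 ≤ c s) (hβ0 : ∀ s ∈ Icc σ τ, 0 ≤ β s) (hG : 0 ≤ G)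
    (hub : ∀ s ∈ Icc σ τ, u s ≤ c s * (B - y s) - G * β s) :
    Real.exp (-∫ s in σ..τ, c s) * ((B - y σ) + G * ∫ s in σ..τ, β s) ≤ B - y τ := by
  -- `(exp C * θ)' = exp C * (c * θ - u) ≥ G * β` a.e., where `C = ∫ c` and `θ = B - y`.
  set C : ℝ → ℝ := fun t => ∫ s in σ..t, c s
  set θ : ℝ → ℝ := fun t => B - y σ - ∫ s in σ..t, u s
  have hσ : σ ∈ uIcc σ τ := left_mem_uIcc
  have hθy : ∀ t ∈ Icc σ τ, θ t = B - y t := fun t ht => by simp only [θ, hy t ht]; ring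
  have hC0 : ∀ t ∈ Icc σ τ, 0 ≤ C t := fun t ht =>
    intervalIntegral.integral_nonneg ht.1 fun s hs => hc0 s ⟨hs.1, hs.2.trans ht.2⟩
  have hAC : AbsolutelyContinuousOnInterval (fun t => Real.exp (C t) * θ t) σ τ :=
    (hc.absolutelyContinuousOnInterval_intervalIntegral hσ).exp.fun_mul
      ((((LipschitzWith.const (B - y σ)).lipschitzOnWith).absolutelyContinuousOnInterval.sub
        (hu.absolutelyContinuousOnInterval_intervalIntegral hσ)))
  have hderiv : ∀ᵐ s ∂volume.restrict (Icc σ τ),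
      G * β s ≤ deriv (fun t => Real.exp (C t) * θ t) s := by
    rw [← uIcc_of_le hστ]
    filter_upwards [(ae_restrict_iff' measurableSet_uIcc).2 hc.ae_hasDerivAt_integral,
      (ae_restrict_iff' measurableSet_uIcc).2 hu.ae_hasDerivAt_integral,
      ae_restrict_mem measurableSet_uIcc] with s hCs hYs hs
    have hd : HasDerivAt (fun t => Real.exp (C t) * θ t)
        (Real.exp (C s) * c s * θ s + Real.exp (C s) * -u s) s :=
      (hCs σ hσ).exp.mul ((hYs σ hσ).const_sub (B - y σ))
    rw [uIcc_of_le hστ] at hs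
    rw [hd.deriv, hθy s hs]
    have h1 : 1 ≤ Real.exp (C s) := Real.one_le_exp (hC0 s hs)
    have h2 : 0 ≤ G * β s := mul_nonneg hG (hβ0 s hs)
    nlinarith [hub s hs]
  have hmono := intervalIntegral.integral_mono_ae_restrict hστ (hβ.const_mul G)
    hAC.intervalIntegrable_deriv hderiv
  rw [hAC.integral_deriv_eq_sub, intervalIntegral.integral_const_mul] at hmono
  have hθσ : θ σ = B - y σ := by simp [θ]
  have hCσ : C σ = 0 := intervalIntegral.integral_same
  rw [hθσ, hCσ, Real.exp_zero, one_mul, hθy τ ⟨hστ, le_rfl⟩] at hmono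
  calc Real.exp (-C τ) * ((B - y σ) + G * ∫ s in σ..τ, β s)
      ≤ Real.exp (-C τ) * (Real.exp (C τ) * (B - y τ)) := by gcongr; linarith
    _ = B - y τ := by rw [← mul_assoc, ← Real.exp_add, neg_add_cancel, Real.exp_zero, one_mul]

theorem forall_le_of_rate_le_mul_sub {ι : Type*} [Finite ι] {g u c : ι → ℝ → ℝ} {t₀ T K : ℝ}
    (hg : ∀ i, ∀ t ∈ Icc t₀ T, g i t = g i t₀ + ∫ s in t₀..t, u i s)
    (hu : ∀ i, IntervalIntegrable (u i) volume t₀ T)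
    (hc : ∀ i, IntervalIntegrable (c i) volume t₀ T)
    (hc0 : ∀ i, ∀ s ∈ Icc t₀ T, 0 ≤ c i s) (hK : ∀ i, g i t₀ ≤ K)
    (hH : ∀ B, K < B → (∀ j, ∀ t ∈ Icc t₀ T, g j t ≤ B) →
      ∀ i, ∀ s ∈ Icc t₀ T, u i s ≤ c i s * (B - g i s)) :
    ∀ i, ∀ t ∈ Icc t₀ T, g i t ≤ K := by
  -- Apply the integrating-factor bound up to a point where the overall maximum is attained.
  intro i t ht
  by_contra! hKt
  have hT : t₀ ≤ T := ht.1.trans ht.2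
  have hcont : ∀ j, ContinuousOn (g j) (Icc t₀ T) := fun j => by
    have := intervalIntegral.continuousOn_primitive_interval' (hu j) left_mem_uIcc
    rw [uIcc_of_le hT] at this
    exact (continuousOn_const.add this).congr (hg j)
  choose w hw hmax using fun j =>
    isCompact_Icc.exists_isMaxOn (nonempty_Icc.2 hT) (hcont j)
  have : Nonempty ι := ⟨i⟩
  obtain ⟨j, hj⟩ := Finite.exists_max fun j => g j (w j)
  have hall : ∀ j', ∀ t' ∈ Icc t₀ T, g j' t' ≤ g j (w j) := fun j' t' ht' =>
    (hmax j' ht').trans (hj j')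
  have hKB : K < g j (w j) := hKt.trans_le (hall i t ht)
  have hsub : uIcc t₀ (w j) ⊆ uIcc t₀ T := uIcc_subset_uIcc left_mem_uIcc (by
    rw [uIcc_of_le hT]; exact hw j)
  have hgap := exp_neg_integral_mul_le_sub (β := 0) (G := 0) (hw j).1
    (fun t' ht' => hg j t' ⟨ht'.1, ht'.2.trans (hw j).2⟩) ((hu j).mono_set hsub)
    ((hc j).mono_set hsub) intervalIntegrable_const
    (fun s hs => hc0 j s ⟨hs.1, hs.2.trans (hw j).2⟩)
    (fun _ _ => le_rfl) le_rfl (fun s hs => by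
      simpa using hH _ hKB hall j s ⟨hs.1, hs.2.trans (hw j).2⟩)
  have : 0 < Real.exp (-∫ s in t₀..w j, c j s) * (g j (w j) - g j t₀) :=
    mul_pos (Real.exp_pos _) (by linarith [hK j])
  simp only [Pi.zero_apply, intervalIntegral.integral_zero, mul_zero, add_zero, sub_self] at hgap
  linarith


open RealInnerProductSpace

theorem exists_infDist_convexHull_le {E ι : Type*} [NormedAddCommGroup E] [InnerProductSpace ℝ E]
    [Finite ι] [Nonempty ι] (p : ι → E) (w : E) :
    ∃ e : E, ‖e‖ ≤ 1 ∧ Metric.infDist w (convexHull ℝ (range p)) ≤ ⟪e, w⟫ - ⨆ k, ⟪e, p k⟫ := by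
  obtain ⟨v, hv, hwv⟩ := ((finite_range p).isCompact_convexHull (𝕜 := ℝ)).exists_infDist_eq_dist
    ((range_nonempty p).mono (subset_convexHull ℝ _)) w
  have hproj : ∀ q ∈ convexHull ℝ (range p), ⟪w - v, q - v⟫ ≤ 0 := by
    refine (norm_eq_iInf_iff_real_inner_le_zero (convex_convexHull ℝ _) hv).1 ?_
    rw [← dist_eq_norm, ← hwv, Metric.infDist_eq_iInf]
    exact iInf_congr fun q => dist_eq_norm _ _
  refine ⟨‖w - v‖⁻¹ • (w - v), ?_, ?_⟩
  · rw [norm_smul, norm_inv, norm_norm]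
    exact inv_mul_le_one_of_le₀ le_rfl (norm_nonneg _)
  · have hsup : ⨆ k, ⟪‖w - v‖⁻¹ • (w - v), p k⟫ ≤ ⟪‖w - v‖⁻¹ • (w - v), v⟫ := by
      refine ciSup_le fun k => ?_
      have := hproj (p k) (subset_convexHull ℝ _ (mem_range_self k))
      rw [real_inner_smul_left, real_inner_smul_left, ← sub_nonpos, ← mul_sub, ← inner_sub_right]
      exact mul_nonpos_of_nonneg_of_nonpos (by positivity) this
    have hval : ⟪‖w - v‖⁻¹ • (w - v), w⟫ - ⟪‖w - v‖⁻¹ • (w - v), v⟫ = ‖w - v‖ := by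
      rw [← inner_sub_right, real_inner_smul_left, real_inner_self_eq_norm_sq]
      rcases eq_or_ne ‖w - v‖ 0 with h | h
      · simp [h]
      · field_simp
    rw [hwv, dist_eq_norm]
    linarith

theorem Relation.ReflTransGen.exists_rel_mem_notMem {α : Type*} {r : α → α → Prop} {S : Set α}
    {u v : α} (huv : Relation.ReflTransGen r u v) (hu : u ∈ S) (hv : v ∉ S) :
    ∃ u' ∈ S, ∃ v' ∉ S, r u' v' := by
  induction huv with
  | refl => exact absurd hu hv
  | @tail w v _ hwv ih =>
    by_cases hw : w ∈ S
    · exact ⟨w, hw, v, hv, hwv⟩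
    · exact ih hw

theorem QSCrel.exists_rel_some_notMem {α : Type*} [Fintype α] {r : Option α → Option α → Prop}
    (hr : QSCrel r) (hnone : ∀ u, ¬ r u none) {S : Finset (Option α)} (hS : none ∈ S)
    (hSu : S ≠ Finset.univ) : ∃ u ∈ S, ∃ v : α, some v ∉ S ∧ r u (some v) := by
  obtain ⟨root, hroot⟩ := hr
  have hroot_none : root = none := by
    rcases (hroot none).cases_tail with h | ⟨u, -, hu⟩
    · exact h.symm
    · exact absurd hu (hnone u)
  obtain ⟨w, hw⟩ : ∃ w, w ∉ S := by
    by_contra! h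
    exact hSu (Finset.eq_univ_iff_forall.2 h)
  subst hroot_none
  obtain ⟨u, hu, v, hv, huv⟩ := (hroot w).exists_rel_mem_notMem (S := ↑S) hS hw
  cases v with
  | none => exact absurd hS hv
  | some v => exact ⟨u, hu, v, hv, huv⟩

theorem IncrSeq.nonneg {tp : ℕ → ℝ} (htp : IncrSeq tp) (p : ℕ) : 0 ≤ tp p :=
  htp.2.2.trans (htp.1.monotone p.zero_le)

theorem IncrSeq.exists_mem_Ico {tp : ℕ → ℝ} (htp : IncrSeq tp) {t : ℝ} (ht : tp 0 ≤ t) :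
    ∃ q, tp q ≤ t ∧ t < tp (q + 1) := by
  classical
  have hex : ∃ n, t < tp n := (htp.2.1.eventually_gt_atTop t).exists
  obtain ⟨q, hq⟩ : ∃ q, Nat.find hex = q + 1 :=
    Nat.exists_eq_succ_of_ne_zero fun h0 => (Nat.find_spec hex).not_ge (h0 ▸ ht)
  exact ⟨q, not_lt.1 (Nat.find_min hex (by omega)), hq ▸ Nat.find_spec hex⟩

-- The gap `hbar` makes all delayed values read in the window `[tp p, tp (p + 1)]` come after `T l`.
def IsSchedule (tp : ℕ → ℝ) (hbar : ℝ) (T : ℕ → ℝ) : Prop :=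
  ∀ l, ∃ p, T l + hbar ≤ tp p ∧ T (l + 1) = tp (p + 1)

theorem IsSchedule.monotone {tp T : ℕ → ℝ} {hbar : ℝ} (hT : IsSchedule tp hbar T)
    (htp : Monotone tp) (hbar0 : 0 ≤ hbar) : Monotone T :=
  monotone_nat_of_le_succ fun l => by
    obtain ⟨p, hp, hTp⟩ := hT l
    rw [hTp]
    linarith [htp p.le_succ]

theorem IncrSeq.integral_le_of_mem_Ico {tp : ℕ → ℝ} (htp : IncrSeq tp) {f : ℝ → ℝ}
    (hf0 : ∀ s, 0 ≤ s → 0 ≤ f s)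
    (hfi : ∀ t₁ t₂, 0 ≤ t₁ → 0 ≤ t₂ → IntervalIntegrable f volume t₁ t₂) {Lw : ℝ}
    (hLw : ∀ p, ∫ s in tp p..tp (p + 1), f s ≤ Lw) {t hbar Uh : ℝ} (ht : 0 ≤ t)
    (hbar0 : 0 ≤ hbar) (hUh : ∫ s in t..t + hbar, f s ≤ Uh) {q : ℕ} (hq : tp q ≤ t + hbar)
    (hq' : t + hbar < tp (q + 1)) : ∫ s in t..tp (q + 2), f s ≤ Uh + 2 * Lw := by
  have htp0 := htp.nonneg
  have hmid : ∫ s in t + hbar..tp (q + 1), f s ≤ Lw :=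
    (intervalIntegral.integral_mono_interval hq hq'.le le_rfl
      ((ae_restrict_iff' measurableSet_Ioc).2 (ae_of_all _ fun s hs =>
        hf0 s ((htp0 _).trans hs.1.le))) (hfi _ _ (htp0 _) (htp0 _))).trans (hLw q)
  have h₁ := intervalIntegral.integral_add_adjacent_intervals
    (hfi t (t + hbar) ht (by linarith)) (hfi _ (tp (q + 2)) (by linarith) (htp0 _))
  have h₂ := intervalIntegral.integral_add_adjacent_intervals
    (hfi (t + hbar) (tp (q + 1)) (by linarith) (htp0 _)) (hfi _ (tp (q + 2)) (htp0 _) (htp0 _))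
  linarith [hLw (q + 1)]

theorem IncrSeq.exists_schedule {ι : Type*} {tp : ℕ → ℝ} (htp : IncrSeq tp) {hbar Lw Uh : ℝ}
    (hbar0 : 0 ≤ hbar) {f : ι → ℝ → ℝ} (hf0 : ∀ i s, 0 ≤ s → 0 ≤ f i s)
    (hfi : ∀ i t₁ t₂, 0 ≤ t₁ → 0 ≤ t₂ → IntervalIntegrable (f i) volume t₁ t₂)
    (hLw : ∀ i p, ∫ s in tp p..tp (p + 1), f i s ≤ Lw)
    (hUh : ∀ i t, 0 ≤ t → ∫ s in t..t + hbar, f i s ≤ Uh) (N : ℕ) {t₀ : ℝ} (ht₀ : tp 0 ≤ t₀) :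
    ∃ T : ℕ → ℝ, T 0 = t₀ ∧ IsSchedule tp hbar T ∧
      ∀ i, ∫ s in t₀..T N + hbar, f i s ≤ N * (Uh + 2 * Lw) + Uh := by
  have h0 : 0 ≤ t₀ := (htp.nonneg 0).trans ht₀
  have hwin : ∀ t, ∃ q, tp 0 ≤ t → tp q ≤ t ∧ t < tp (q + 1) := fun t => by
    by_cases ht : tp 0 ≤ t
    · obtain ⟨q, hq⟩ := htp.exists_mem_Ico ht
      exact ⟨q, fun _ => hq⟩
    · exact ⟨0, fun h => absurd h ht⟩
  choose q hq using hwin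
  set T : ℕ → ℝ := fun l => (fun t => tp (q (t + hbar) + 2))^[l] t₀
  have hTsucc : ∀ l, T (l + 1) = tp (q (T l + hbar) + 2) := fun l =>
    Function.iterate_succ_apply' _ _ _
  have hT : ∀ l, t₀ ≤ T l ∧ T l + hbar < tp (q (T l + hbar) + 1) ∧
      ∀ i, ∫ s in t₀..T l, f i s ≤ l * (Uh + 2 * Lw) := by
    intro l
    induction l with
    | zero => exact ⟨le_rfl, (hq _ (show tp 0 ≤ t₀ + hbar by linarith)).2, fun i => by simp [T]⟩
    | succ l ih =>
      obtain ⟨hl, hlq, hlf⟩ := ih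
      have hle : T l ≤ T (l + 1) := by
        rw [hTsucc]
        linarith [htp.1.monotone (q (T l + hbar) + 1).le_succ]
      refine ⟨hl.trans hle, (hq _ (by linarith [htp.nonneg 0, ht₀])).2, fun i => ?_⟩
      have hstep := htp.integral_le_of_mem_Ico (hf0 i) (hfi i) (hLw i) (h0.trans hl) hbar0
        (hUh i _ (h0.trans hl)) (hq _ (by linarith)).1 hlq
      rw [← intervalIntegral.integral_add_adjacent_intervals (hfi i _ _ h0 (h0.trans hl))
        (hfi i _ _ (h0.trans hl) (h0.trans (hl.trans hle))), hTsucc]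
      push_cast
      linarith [hlf i]
  refine ⟨T, rfl, fun l => ⟨q (T l + hbar) + 1, (hT l).2.1.le, hTsucc l⟩, fun i => ?_⟩
  have hN : 0 ≤ T N := h0.trans (hT N).1
  rw [← intervalIntegral.integral_add_adjacent_intervals (hfi i _ _ h0 hN)
    (hfi i _ _ hN (by linarith))]
  linarith [(hT N).2.2 i, hUh i _ hN]

theorem Weights.nonneg {ι : Type*} {A : ι → ι → ℝ → ℝ} (hA : Weights A) {i j : ι} (hij : i ≠ j)
    {s : ℝ} (hs : 0 ≤ s) : 0 ≤ A i j s :=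
  (hA i j hij).2.1 s hs

theorem Weights.intervalIntegrable {ι : Type*} {A : ι → ι → ℝ → ℝ} (hA : Weights A) {i j : ι}
    (hij : i ≠ j) {t₁ t₂ : ℝ} (h₁ : 0 ≤ t₁) (h₂ : 0 ≤ t₂) :
    IntervalIntegrable (A i j) volume t₁ t₂ :=
  (((hA i j hij).2.2 (max t₁ t₂)).mono_set (by
    rw [uIcc_eq_union]
    exact union_subset (Icc_subset_Icc h₁ le_sup_right)
      (Icc_subset_Icc h₂ le_sup_left))).intervalIntegrable

def rowSum {ι : Type*} [Fintype ι] [DecidableEq ι] (A : ι → ι → ℝ → ℝ) (i : ι) (s : ℝ) : ℝ :=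
  ∑ j ∈ Finset.univ.erase i, A i j s

section RowSum

variable {ι : Type*} [Fintype ι] [DecidableEq ι] {A : ι → ι → ℝ → ℝ}

theorem Weights.rowSum_nonneg (hA : Weights A) (i : ι) {s : ℝ} (hs : 0 ≤ s) :
    0 ≤ rowSum A i s :=
  Finset.sum_nonneg fun _ hj => hA.nonneg (Finset.ne_of_mem_erase hj).symm hs

theorem Weights.intervalIntegrable_rowSum (hA : Weights A) (i : ι) {t₁ t₂ : ℝ} (h₁ : 0 ≤ t₁)
    (h₂ : 0 ≤ t₂) : IntervalIntegrable (rowSum A i) volume t₁ t₂ := by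
  rw [show rowSum A i = ∑ j ∈ Finset.univ.erase i, A i j from
    funext fun s => (Finset.sum_apply s _ _).symm]
  exact IntervalIntegrable.sum _ fun j hj =>
    hA.intervalIntegrable (Finset.ne_of_mem_erase hj).symm h₁ h₂

theorem Weights.integral_rowSum_le (hA : Weights A) (i : ι) {t₁ t₂ C : ℝ} (h₁ : 0 ≤ t₁)
    (h₂ : 0 ≤ t₂) (hC : ∀ j, i ≠ j → ∫ s in t₁..t₂, A i j s ≤ C) :
    ∫ s in t₁..t₂, rowSum A i s ≤ (Fintype.card ι - 1 : ℕ) * C := by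
  unfold rowSum
  rw [intervalIntegral.integral_finsetSum fun j hj =>
    hA.intervalIntegrable (Finset.ne_of_mem_erase hj).symm h₁ h₂]
  refine (Finset.sum_le_sum fun j hj => hC j (Finset.ne_of_mem_erase hj).symm).trans_eq ?_
  rw [Finset.sum_const, Finset.card_erase_of_mem (Finset.mem_univ i), Finset.card_univ,
    nsmul_eq_mul]

theorem Weights.exists_integral_rowSum_le_of_tpBounded (hA : Weights A) {tp : ℕ → ℝ}
    (htp : IncrSeq tp) (hb : tpBounded A tp) :
    ∃ Lw, ∀ i p, ∫ s in tp p..tp (p + 1), rowSum A i s ≤ Lw := by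
  obtain ⟨L, hL⟩ := hb
  exact ⟨_, fun i p => hA.integral_rowSum_le i (htp.nonneg p) (htp.nonneg (p + 1))
    fun j hij => hL p i j hij⟩

theorem Weights.exists_integral_rowSum_le_of_ULI (hA : Weights A) (hU : ULI A) {D : ℝ}
    (hD : 0 ≤ D) : ∃ Uh, ∀ i t, 0 ≤ t → ∫ s in t..t + D, rowSum A i s ≤ Uh := by
  obtain ⟨M, hM⟩ := hU (D + 1) (by linarith)
  refine ⟨_, fun i t ht => (intervalIntegral.integral_mono_interval le_rfl (by linarith)
    (by linarith : t + D ≤ t + (D + 1)) ((ae_restrict_iff' measurableSet_Ioc).2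
      (ae_of_all _ fun _ hs => hA.rowSum_nonneg i (ht.trans hs.1.le)))
    (hA.intervalIntegrable_rowSum i ht (by linarith))).trans
      (hA.integral_rowSum_le i ht (by linarith) fun j hij => hM t ht i j hij)⟩

end RowSum

theorem Finset.sum_erase_some {α M : Type*} [Fintype α] [DecidableEq α] [AddCommGroup M]
    (f : Option α → M) (v : α) :
    ∑ jo ∈ Finset.univ.erase (some v), f jo = f none + ∑ j ∈ Finset.univ.erase v, f (some j) := by
  rw [Finset.sum_erase_eq_sub (Finset.mem_univ _), Fintype.sum_option,
    Finset.sum_erase_eq_sub (Finset.mem_univ _)]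
  abel

section Containment

variable {V W : Type*} {m : ℕ} {a h : V → V → ℝ → ℝ} {b : V → W → ℝ → ℝ}
  {xL : W → EuclideanSpace ℝ (Fin m)} {x : ℝ → V → EuclideanSpace ℝ (Fin m)} {hbar tstar : ℝ}

def augmented [Fintype W] (a : V → V → ℝ → ℝ) (b : V → W → ℝ → ℝ) :
    Option V → Option V → ℝ → ℝ :=
  Ahat a fun i t => ∑ k : W, b i k t

theorem weights_augmented [Fintype W] (hW : Weights a) (hB : BGains b) :
    Weights (augmented a b) := by
  rintro (_ | i) jo hij
  · exact ⟨measurable_const, fun _ _ => le_rfl, fun _ => integrableOn_zero⟩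
  cases jo with
  | none =>
    exact ⟨Finset.measurable_sum _ fun k _ => (hB i k).1,
      fun t ht => Finset.sum_nonneg fun k _ => (hB i k).2.1 t ht,
      fun T => integrable_finsetSum _ fun k _ => (hB i k).2.2 T⟩
  | some j => exact hW i j fun hij' => hij (hij' ▸ rfl)

noncomputable def excess (xL : W → EuclideanSpace ℝ (Fin m))
    (x : ℝ → V → EuclideanSpace ℝ (Fin m)) (e : EuclideanSpace ℝ (Fin m)) : Option V → ℝ → ℝ
  | none, _ => 0
  | some i, t => ⟪e, x t i⟫ - ⨆ k, ⟪e, xL k⟫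

theorem excess_some_le [Finite W] (e : EuclideanSpace ℝ (Fin m)) (he : ‖e‖ ≤ 1) (i : V) (t : ℝ)
    (k : W) : excess xL x e (some i) t ≤ ‖x t i‖ + ‖xL k‖ := by
  have h₁ : ⟪e, x t i⟫ ≤ ‖x t i‖ :=
    (real_inner_le_norm _ _).trans (mul_le_of_le_one_left (norm_nonneg _) he)
  have h₂ : -‖xL k‖ ≤ ⟪e, xL k⟫ := neg_le_of_abs_le
    ((abs_real_inner_le_norm _ _).trans (mul_le_of_le_one_left (norm_nonneg _) he))
  have h₃ : ⟪e, xL k⟫ ≤ ⨆ k, ⟪e, xL k⟫ :=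
    le_ciSup (f := fun k => ⟪e, xL k⟫) (Finite.bddAbove_range _) k
  simp only [excess]
  linarith

theorem tendsto_infDist_convexHull_of_excess_le [Finite W] [Nonempty W] (i : V) {δ K₀ : ℝ}
    (hδ0 : 0 < δ) (hδ1 : δ ≤ 1)
    (hx : ∀ r : ℕ, ∃ t₀, ∀ e : EuclideanSpace ℝ (Fin m), ‖e‖ ≤ 1 → ∀ t, t₀ ≤ t →
      excess xL x e (some i) t ≤ (1 - δ) ^ r * K₀) :
    Tendsto (fun t => Metric.infDist (x t i) (convexHull ℝ (range xL))) atTop (𝓝 0) := by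
  rw [Metric.tendsto_atTop]
  intro κ hκ
  have hgeom : Tendsto (fun r : ℕ => (1 - δ) ^ r * K₀) atTop (𝓝 0) := by
    simpa using (tendsto_pow_atTop_nhds_zero_of_lt_one (by linarith) (by linarith)).mul_const K₀
  obtain ⟨r, hr⟩ := (hgeom.eventually (gt_mem_nhds hκ)).exists
  obtain ⟨t₀, ht₀⟩ := hx r
  refine ⟨t₀, fun t ht => ?_⟩
  obtain ⟨e, he, hdist⟩ := exists_infDist_convexHull_le xL (x t i)
  rw [Real.dist_eq, sub_zero, abs_of_nonneg Metric.infDist_nonneg]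
  exact hdist.trans_lt ((ht₀ e he t ht).trans_lt hr)

variable [Fintype V] [DecidableEq V] [Fintype W]

noncomputable def excessRate (m : ℕ) (a h : V → V → ℝ → ℝ) (b : V → W → ℝ → ℝ)
    (xL : W → EuclideanSpace ℝ (Fin m)) (x : ℝ → V → EuclideanSpace ℝ (Fin m))
    (e : EuclideanSpace ℝ (Fin m)) : Option V → ℝ → ℝ
  | none, _ => 0
  | some i, s => ⟪e, rhsCont m a h b xL x i s⟫

theorem excessRate_le (hW : Weights a) (hB : BGains b) (hD : Delays h hbar) (hbar0 : 0 ≤ hbar)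
    (e : EuclideanSpace ℝ (Fin m)) {s : ℝ} (hs : 0 ≤ s) (io : Option V) (φ : Option V → ℝ)
    (hφ : ∀ jo, jo ≠ io → ∀ σ ∈ Icc (s - hbar) s, excess xL x e jo σ ≤ φ jo) :
    excessRate m a h b xL x e io s ≤
      ∑ jo ∈ Finset.univ.erase io, augmented a b io jo s * (φ jo - excess xL x e io s) := by
  cases io with
  | none => simp [excessRate, augmented, Ahat]
  | some v =>
    have hnone : 0 ≤ φ none := by
      simpa [excess] using hφ none (by simp) s ⟨by linarith, le_rfl⟩
    have hj : ∀ j ∈ Finset.univ.erase v, a v j s * (⟪e, x (s - h v j s) j⟫ - ⟪e, x s v⟫) ≤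
        a v j s * (φ (some j) - excess xL x e (some v) s) := by
      intro j hj
      have hmem : s - h v j s ∈ Icc (s - hbar) s := by
        have := (hD v j).2 s hs
        constructor <;> linarith [this.1, this.2]
      have := hφ (some j) (by simpa using Finset.ne_of_mem_erase hj) _ hmem
      simp only [excess] at this ⊢
      exact mul_le_mul_of_nonneg_left (by linarith)
        (hW.nonneg (Finset.ne_of_mem_erase hj).symm hs)
    have hk : ∀ k ∈ (Finset.univ : Finset W), b v k s * (⟪e, xL k⟫ - ⟪e, x s v⟫) ≤
        b v k s * (φ none - excess xL x e (some v) s) := by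
      intro k _
      have : ⟪e, xL k⟫ ≤ ⨆ k, ⟪e, xL k⟫ :=
        le_ciSup (f := fun k => ⟪e, xL k⟫) (Finite.bddAbove_range _) k
      simp only [excess]
      exact mul_le_mul_of_nonneg_left (by linarith) ((hB v k).2.1 s hs)
    rw [Finset.sum_erase_some]
    simp only [excessRate, rhsCont, inner_add_right, inner_sum, real_inner_smul_right,
      inner_sub_right, augmented, Ahat, Finset.sum_mul]
    linarith [Finset.sum_le_sum hj, Finset.sum_le_sum hk]

theorem excessRate_le_mul (hW : Weights a) (hB : BGains b) (hD : Delays h hbar)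
    (hbar0 : 0 ≤ hbar) (e : EuclideanSpace ℝ (Fin m)) {s B : ℝ} (hs : 0 ≤ s) (io : Option V)
    (hBs : ∀ jo, ∀ σ ∈ Icc (s - hbar) s, excess xL x e jo σ ≤ B) :
    excessRate m a h b xL x e io s ≤
      rowSum (augmented a b) io s * (B - excess xL x e io s) := by
  rw [rowSum, Finset.sum_mul]
  exact excessRate_le hW hB hD hbar0 e hs io _ fun jo _ => hBs jo

theorem excessRate_le_mul_sub (hW : Weights a) (hB : BGains b) (hD : Delays h hbar)
    (hbar0 : 0 ≤ hbar) (e : EuclideanSpace ℝ (Fin m)) {s B g : ℝ} (hs : 0 ≤ s)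
    {io uo : Option V} (huo : uo ≠ io)
    (hBs : ∀ jo, ∀ σ ∈ Icc (s - hbar) s, excess xL x e jo σ ≤ B)
    (hus : ∀ σ ∈ Icc (s - hbar) s, excess xL x e uo σ ≤ B - g) :
    excessRate m a h b xL x e io s ≤
      rowSum (augmented a b) io s * (B - excess xL x e io s) - g * augmented a b io uo s := by
  refine (excessRate_le hW hB hD hbar0 e hs io (fun jo => if jo = uo then B - g else B)
    fun jo _ σ hσ => ?_).trans_eq ?_
  · split_ifs with hjo
    · exact hjo ▸ hus σ hσ
    · exact hBs jo σ hσ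
  · have hsplit : ∀ jo, (if jo = uo then B - g else B) - excess xL x e io s =
        (B - excess xL x e io s) - if jo = uo then g else 0 := fun jo => by
      split_ifs <;> ring
    simp only [hsplit, mul_sub, Finset.sum_sub_distrib, mul_ite, mul_zero,
      Finset.sum_ite_eq', Finset.mem_erase, ne_eq, huo, not_false_eq_true, Finset.mem_univ,
      and_self, if_true, rowSum, Finset.sum_mul]
    ring

theorem IsSolCont.intervalIntegrable (hsol : IsSolCont m a h b xL hbar tstar x) (i : V)
    {t₁ t₂ : ℝ} (h₁ : tstar ≤ t₁) (h₂ : tstar ≤ t₂) :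
    IntervalIntegrable (rhsCont m a h b xL x i) volume t₁ t₂ :=
  (hsol.2.2 i t₁ h₁).1.symm.trans (hsol.2.2 i t₂ h₂).1

theorem IsSolCont.eq_add_integral (hsol : IsSolCont m a h b xL hbar tstar x) (i : V)
    {t₁ t₂ : ℝ} (h₁ : tstar ≤ t₁) (h₂ : tstar ≤ t₂) :
    x t₂ i = x t₁ i + ∫ s in t₁..t₂, rhsCont m a h b xL x i s := by
  rw [(hsol.2.2 i t₂ h₂).2, (hsol.2.2 i t₁ h₁).2, add_assoc,
    intervalIntegral.integral_add_adjacent_intervals (hsol.2.2 i t₁ h₁).1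
      (hsol.intervalIntegrable i h₁ h₂)]

structure ContainmentSetting (m : ℕ) (a h : V → V → ℝ → ℝ) (b : V → W → ℝ → ℝ)
    (xL : W → EuclideanSpace ℝ (Fin m)) (hbar tstar : ℝ)
    (x : ℝ → V → EuclideanSpace ℝ (Fin m)) : Prop where
  weights : Weights a
  gains : BGains b
  delays : Delays h hbar
  hbar_nonneg : 0 ≤ hbar
  tstar_nonneg : 0 ≤ tstar
  isSol : IsSolCont m a h b xL hbar tstar x

namespace ContainmentSetting

theorem intervalIntegrable_excessRate (H : ContainmentSetting m a h b xL hbar tstar x)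
    (e : EuclideanSpace ℝ (Fin m)) (io : Option V) {t₁ t₂ : ℝ} (h₁ : tstar ≤ t₁)
    (h₂ : tstar ≤ t₂) : IntervalIntegrable (excessRate m a h b xL x e io) volume t₁ t₂ := by
  cases io with
  | none => exact intervalIntegrable_const
  | some i =>
    have hi := H.isSol.intervalIntegrable i h₁ h₂
    exact ⟨(innerSL ℝ e).integrable_comp hi.1, (innerSL ℝ e).integrable_comp hi.2⟩

theorem excess_eq_add_integral (H : ContainmentSetting m a h b xL hbar tstar x)
    (e : EuclideanSpace ℝ (Fin m)) (io : Option V) {t₁ t₂ : ℝ} (h₁ : tstar ≤ t₁)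
    (h₂ : tstar ≤ t₂) :
    excess xL x e io t₂ = excess xL x e io t₁ + ∫ s in t₁..t₂, excessRate m a h b xL x e io s := by
  cases io with
  | none => simp [excess, excessRate]
  | some i =>
    have hcomm := (innerSL ℝ e).intervalIntegral_comp_comm (H.isSol.intervalIntegrable i h₁ h₂)
    simp only [innerSL_apply_apply] at hcomm
    simp only [excess, excessRate, H.isSol.eq_add_integral i h₁ h₂, inner_add_right, hcomm]
    ring

theorem rowSum_nonneg (H : ContainmentSetting m a h b xL hbar tstar x) (io : Option V) {s : ℝ}
    (hs : tstar ≤ s) : 0 ≤ rowSum (augmented a b) io s :=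
  (weights_augmented H.weights H.gains).rowSum_nonneg io (H.tstar_nonneg.trans hs)

theorem intervalIntegrable_rowSum (H : ContainmentSetting m a h b xL hbar tstar x)
    (io : Option V) {t₁ t₂ : ℝ} (h₁ : tstar ≤ t₁) (h₂ : tstar ≤ t₂) :
    IntervalIntegrable (rowSum (augmented a b) io) volume t₁ t₂ :=
  (weights_augmented H.weights H.gains).intervalIntegrable_rowSum io
    (H.tstar_nonneg.trans h₁) (H.tstar_nonneg.trans h₂)

theorem excess_le_of_window (H : ContainmentSetting m a h b xL hbar tstar x)
    (e : EuclideanSpace ℝ (Fin m)) {t₀ B : ℝ} (ht₀ : tstar ≤ t₀)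
    (hwin : ∀ jo, ∀ t ∈ Icc (t₀ - hbar) t₀, excess xL x e jo t ≤ B) :
    ∀ jo t, t₀ - hbar ≤ t → excess xL x e jo t ≤ B := by
  intro jo t ht
  rcases le_total t t₀ with htt | htt
  · exact hwin jo t ⟨ht, htt⟩
  refine forall_le_of_rate_le_mul_sub (g := excess xL x e) (c := rowSum (augmented a b))
    (fun io t' ht' => H.excess_eq_add_integral e io ht₀ (ht₀.trans ht'.1))
    (fun io => H.intervalIntegrable_excessRate e io ht₀ (ht₀.trans htt))
    (fun io => H.intervalIntegrable_rowSum io ht₀ (ht₀.trans htt))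
    (fun io s hs => H.rowSum_nonneg io (ht₀.trans hs.1))
    (fun io => hwin io t₀ ⟨by linarith [H.hbar_nonneg], le_rfl⟩) ?_ jo t ⟨htt, le_rfl⟩
  intro B' hBB' hall io s hs
  refine excessRate_le_mul H.weights H.gains H.delays H.hbar_nonneg e
    (H.tstar_nonneg.trans (ht₀.trans hs.1)) io fun jo σ hσ => ?_
  rcases le_total σ t₀ with hσt | hσt
  · exact (hwin jo σ ⟨by linarith [hσ.1, hs.1], hσt⟩).trans hBB'.le
  · exact hall jo σ ⟨hσt, hσ.2.trans hs.2⟩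

theorem excess_persist (H : ContainmentSetting m a h b xL hbar tstar x)
    (e : EuclideanSpace ℝ (Fin m)) (io : Option V) {σ τ B : ℝ} (hσ : tstar ≤ σ) (hστ : σ ≤ τ)
    (hB : ∀ jo, ∀ t ∈ Icc (σ - hbar) τ, excess xL x e jo t ≤ B) :
    Real.exp (-∫ s in σ..τ, rowSum (augmented a b) io s) * (B - excess xL x e io σ) ≤
      B - excess xL x e io τ := by
  simpa using exp_neg_integral_mul_le_sub (β := 0) (G := 0) hστ
    (fun t ht => H.excess_eq_add_integral e io hσ (hσ.trans ht.1))
    (H.intervalIntegrable_excessRate e io hσ (hσ.trans hστ))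
    (H.intervalIntegrable_rowSum io hσ (hσ.trans hστ)) intervalIntegrable_const
    (fun s hs => H.rowSum_nonneg io (hσ.trans hs.1)) (fun _ _ => le_rfl) le_rfl
    fun s hs => by
      simpa using excessRate_le_mul H.weights H.gains H.delays H.hbar_nonneg e
        (H.tstar_nonneg.trans (hσ.trans hs.1)) io fun jo t ht =>
          hB jo t ⟨by linarith [ht.1, hs.1], ht.2.trans hs.2⟩

theorem excess_gap_of_arc (H : ContainmentSetting m a h b xL hbar tstar x)
    (e : EuclideanSpace ℝ (Fin m)) {io uo : Option V} (huo : uo ≠ io) {σ τ B g : ℝ}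
    (hσ : tstar ≤ σ) (hστ : σ ≤ τ) (hg : 0 ≤ g)
    (hB : ∀ jo, ∀ t ∈ Icc (σ - hbar) τ, excess xL x e jo t ≤ B)
    (hu : ∀ t ∈ Icc (σ - hbar) τ, excess xL x e uo t ≤ B - g) :
    Real.exp (-∫ s in σ..τ, rowSum (augmented a b) io s) *
        ((B - excess xL x e io σ) + g * ∫ s in σ..τ, augmented a b io uo s) ≤
      B - excess xL x e io τ :=
  exp_neg_integral_mul_le_sub hστ
    (fun t ht => H.excess_eq_add_integral e io hσ (hσ.trans ht.1))
    (H.intervalIntegrable_excessRate e io hσ (hσ.trans hστ))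
    (H.intervalIntegrable_rowSum io hσ (hσ.trans hστ))
    ((weights_augmented H.weights H.gains).intervalIntegrable huo.symm
      (H.tstar_nonneg.trans hσ) (H.tstar_nonneg.trans (hσ.trans hστ)))
    (fun s hs => H.rowSum_nonneg io (hσ.trans hs.1))
    (fun s hs => (weights_augmented H.weights H.gains).nonneg huo.symm
      (H.tstar_nonneg.trans (hσ.trans hs.1))) hg
    fun s hs => excessRate_le_mul_sub H.weights H.gains H.delays H.hbar_nonneg e
      (H.tstar_nonneg.trans (hσ.trans hs.1)) huo
      (fun jo t ht => hB jo t ⟨by linarith [ht.1, hs.1], ht.2.trans hs.2⟩)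
      fun t ht => hu t ⟨by linarith [ht.1, hs.1], ht.2.trans hs.2⟩

theorem integral_rowSum_mono (H : ContainmentSetting m a h b xL hbar tstar x) (io : Option V)
    {t₁ t₂ t₃ t₄ : ℝ} (h₁ : tstar ≤ t₁) (h₁₂ : t₁ ≤ t₂) (h₂₃ : t₂ ≤ t₃) (h₃₄ : t₃ ≤ t₄) :
    ∫ s in t₂..t₃, rowSum (augmented a b) io s ≤ ∫ s in t₁..t₄, rowSum (augmented a b) io s :=
  intervalIntegral.integral_mono_interval h₁₂ h₂₃ h₃₄
    ((ae_restrict_iff' measurableSet_Ioc).2 (ae_of_all _ fun _ hs =>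
      H.rowSum_nonneg io (h₁.trans hs.1.le)))
    (H.intervalIntegrable_rowSum io h₁ (h₁.trans (h₁₂.trans (h₂₃.trans h₃₄))))

theorem excess_le_sub_of_persist (H : ContainmentSetting m a h b xL hbar tstar x)
    (e : EuclideanSpace ℝ (Fin m)) (io : Option V) {t₀ T σ τ B G P : ℝ} (ht₀ : tstar ≤ t₀)
    (hσ : t₀ ≤ σ) (hστ : σ ≤ τ) (hτ : τ ≤ T)
    (hP : ∫ s in t₀..T, rowSum (augmented a b) io s ≤ P)
    (hB : ∀ jo, ∀ t ∈ Icc (t₀ - hbar) T, excess xL x e jo t ≤ B) (hG : 0 ≤ G)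
    (hio : excess xL x e io σ ≤ B - G) : excess xL x e io τ ≤ B - Real.exp (-P) * G := by
  have hexp := Real.exp_le_exp.2 (neg_le_neg
    ((H.integral_rowSum_mono io ht₀ hσ hστ hτ).trans hP))
  have := mul_le_mul hexp (show G ≤ B - excess xL x e io σ by linarith) hG (Real.exp_pos _).le
  linarith [H.excess_persist e io (ht₀.trans hσ) hστ fun jo t ht =>
    hB jo t ⟨by linarith [ht.1], ht.2.trans hτ⟩]

theorem excess_le_sub_of_arc (H : ContainmentSetting m a h b xL hbar tstar x)
    (e : EuclideanSpace ℝ (Fin m)) {io uo : Option V} (huo : uo ≠ io) {t₀ T σ τ B G P ε : ℝ}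
    (ht₀ : tstar ≤ t₀) (hσ : t₀ + hbar ≤ σ) (hστ : σ ≤ τ) (hτ : τ ≤ T)
    (hP : ∫ s in t₀..T, rowSum (augmented a b) io s ≤ P)
    (hB : ∀ jo, ∀ t ∈ Icc (t₀ - hbar) T, excess xL x e jo t ≤ B) (hG : 0 ≤ G)
    (hu : ∀ t ∈ Icc t₀ T, excess xL x e uo t ≤ B - G)
    (hε : ε ≤ ∫ s in σ..τ, augmented a b io uo s) :
    excess xL x e io τ ≤ B - Real.exp (-P) * (ε * G) := by
  have hbar0 := H.hbar_nonneg
  have hgap := H.excess_gap_of_arc e huo (by linarith) hστ hG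
    (fun jo t ht => hB jo t ⟨by linarith [ht.1], ht.2.trans hτ⟩)
    (fun t ht => hu t ⟨by linarith [ht.1], ht.2.trans hτ⟩)
  have hσB := hB io σ ⟨by linarith, by linarith⟩
  have hβ : 0 ≤ ∫ s in σ..τ, augmented a b io uo s :=
    intervalIntegral.integral_nonneg hστ fun s hs => (weights_augmented H.weights H.gains).nonneg
      huo.symm (H.tstar_nonneg.trans (by linarith [hs.1]))
  have hX : ε * G ≤ (B - excess xL x e io σ) + G * ∫ s in σ..τ, augmented a b io uo s := by
    nlinarith [mul_le_mul_of_nonneg_left hε hG]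
  have hexp := Real.exp_le_exp.2 (neg_le_neg
    ((H.integral_rowSum_mono io ht₀ (by linarith) hστ hτ).trans hP))
  have h₁ := mul_le_mul_of_nonneg_left hX (Real.exp_pos (-P)).le
  have h₂ := mul_le_mul_of_nonneg_right hexp (show 0 ≤ (B - excess xL x e io σ) +
    G * ∫ s in σ..τ, augmented a b io uo s by positivity)
  linarith

theorem exists_level_step (H : ContainmentSetting m a h b xL hbar tstar x)
    (e : EuclideanSpace ℝ (Fin m)) {ε P B G t₀ σ τ T : ℝ} (hε : 0 < ε) (ht₀ : tstar ≤ t₀)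
    (hσ : t₀ + hbar ≤ σ) (hστ : σ ≤ τ) (hτ : τ ≤ T)
    (hP : ∀ io, ∫ s in t₀..T, rowSum (augmented a b) io s ≤ P)
    (hQ : QSCeps ε fun io jo => ∫ s in σ..τ, augmented a b io jo s)
    (hB : ∀ jo, ∀ t ∈ Icc (t₀ - hbar) T, excess xL x e jo t ≤ B) (hG : 0 ≤ G)
    {S : Finset (Option V)} (hnone : none ∈ S)
    (hS : ∀ jo ∈ S, ∀ t ∈ Icc t₀ T, excess xL x e jo t ≤ B - G) :
    ∃ S' : Finset (Option V), none ∈ S' ∧ (S' = Finset.univ ∨ S.card < S'.card) ∧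
      ∀ jo ∈ S', ∀ t ∈ Icc τ T, excess xL x e jo t ≤ B - min ε 1 * Real.exp (-P) ^ 2 * G := by
  have hbar0 := H.hbar_nonneg
  have hT : t₀ ≤ T := by linarith
  have hP0 : 0 ≤ P := by
    simpa using (H.integral_rowSum_mono none ht₀ le_rfl le_rfl hT).trans (hP none)
  -- One factor `exp (-P)` is lost across the arc window, another one until time `t`.
  have hcoef : min ε 1 * Real.exp (-P) ^ 2 * G ≤ Real.exp (-P) * G := by
    have : min ε 1 * Real.exp (-P) ≤ 1 := mul_le_one₀ (min_le_right _ _) (Real.exp_pos _).le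
      (Real.exp_le_one_iff.2 (by linarith))
    calc min ε 1 * Real.exp (-P) ^ 2 * G = (min ε 1 * Real.exp (-P)) * (Real.exp (-P) * G) := by
          ring
      _ ≤ 1 * (Real.exp (-P) * G) := by gcongr
      _ = Real.exp (-P) * G := one_mul _
  have hpersist : ∀ jo ∈ S, ∀ t ∈ Icc τ T,
      excess xL x e jo t ≤ B - min ε 1 * Real.exp (-P) ^ 2 * G := fun jo hjo t ht =>
    (H.excess_le_sub_of_persist e jo ht₀ le_rfl (by linarith [ht.1]) ht.2 (hP jo) hB hG
      (hS jo hjo t₀ ⟨le_rfl, hT⟩)).trans (by linarith)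
  by_cases hSu : S = Finset.univ
  · exact ⟨S, hnone, Or.inl hSu, hpersist⟩
  obtain ⟨u, hu, v, hv, harc⟩ := hQ.exists_rel_some_notMem (fun u hu => by
    simp [augmented, Ahat] at hu; linarith) hnone hSu
  have hvτ := H.excess_le_sub_of_arc e (by rintro rfl; exact hv hu) ht₀ hσ hστ hτ (hP _) hB hG
    (hS u hu) harc
  refine ⟨insert (some v) S, Finset.mem_insert_of_mem hnone,
    Or.inr (Finset.card_lt_card (Finset.ssubset_insert hv)), fun jo hjo t ht => ?_⟩
  rcases Finset.mem_insert.1 hjo with rfl | hjo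
  · have := mul_le_mul_of_nonneg_right (min_le_left ε 1)
      (mul_nonneg (sq_nonneg (Real.exp (-P))) hG)
    exact (H.excess_le_sub_of_persist e _ ht₀ (by linarith) ht.1 ht.2 (hP _) hB (by positivity)
      hvτ).trans (by nlinarith)
  · exact hpersist jo hjo t ht

theorem excess_contraction (H : ContainmentSetting m a h b xL hbar tstar x)
    (e : EuclideanSpace ℝ (Fin m)) {ε P B : ℝ} (hε : 0 < ε) {tp : ℕ → ℝ} (htp : Monotone tp)
    (hQ : ∀ p, QSCeps ε fun io jo => ∫ s in tp p..tp (p + 1), augmented a b io jo s)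
    {T : ℕ → ℝ} (hT : IsSchedule tp hbar T) (hT0 : tstar ≤ T 0)
    (hP : ∀ io, ∫ s in T 0..T (Fintype.card V) + hbar, rowSum (augmented a b) io s ≤ P)
    (hB : ∀ jo t, T 0 - hbar ≤ t → excess xL x e jo t ≤ B) :
    ∀ jo t, T (Fintype.card V) ≤ t →
      excess xL x e jo t ≤ B - (min ε 1 * Real.exp (-P) ^ 2) ^ Fintype.card V * B := by
  set N := Fintype.card V
  set γ := min ε 1 * Real.exp (-P) ^ 2
  have hbar0 := H.hbar_nonneg
  have hTmono := hT.monotone htp hbar0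
  have hB0 : 0 ≤ B := by simpa [excess] using hB none (T 0) (by linarith)
  have hγ0 : 0 ≤ γ := by positivity
  have hlevel : ∀ l ≤ N, ∃ S : Finset (Option V), none ∈ S ∧ l + 1 ≤ S.card ∧
      ∀ jo ∈ S, ∀ t ∈ Icc (T l) (T N + hbar), excess xL x e jo t ≤ B - γ ^ l * B := by
    intro l
    induction l with
    | zero => exact fun _ => ⟨{none}, Finset.mem_singleton_self _, by simp, by simp [excess]⟩
    | succ l ih =>
      intro hl
      obtain ⟨S, hnone, hcard, hS⟩ := ih (by omega)
      obtain ⟨p, hp, hTp⟩ := hT l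
      have hl0 := hTmono l.zero_le
      have hlN : T l ≤ T N + hbar := by linarith [hTmono (l.le_succ.trans hl), hTmono l.le_succ]
      obtain ⟨S', hnone', hcard', hS'⟩ := H.exists_level_step e (T := T N + hbar) hε
        (hT0.trans hl0) hp (hTp ▸ htp p.le_succ) (by linarith [hTmono hl])
        (fun io => (H.integral_rowSum_mono io hT0 hl0 hlN le_rfl).trans (hP io)) (hTp ▸ hQ p)
        (fun jo t ht => hB jo t (by linarith [ht.1])) (by positivity) hnone hS
      refine ⟨S', hnone', ?_, fun jo hjo t ht => (hS' jo hjo t ht).trans_eq (by ring)⟩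
      rcases hcard' with rfl | hcard'
      · simp [N] at hl ⊢
        omega
      · omega
  obtain ⟨S, -, hcard, hS⟩ := hlevel N le_rfl
  have hSu : S = Finset.univ := Finset.eq_univ_of_card S (by
    have := Finset.card_le_univ S
    simp only [Fintype.card_option] at this ⊢
    omega)
  intro jo t ht
  exact H.excess_le_of_window e (t₀ := T N + hbar) (by linarith [hTmono (Nat.zero_le N)])
    (fun jo' t' ht' => hS jo' (hSu ▸ Finset.mem_univ _) t' ⟨by linarith [ht'.1], ht'.2⟩) jo t
    (by linarith)

theorem exists_excess_le [Nonempty W] (H : ContainmentSetting m a h b xL hbar tstar x) :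
    ∃ K₀, ∀ e : EuclideanSpace ℝ (Fin m), ‖e‖ ≤ 1 →
      ∀ jo t, tstar - hbar ≤ t → excess xL x e jo t ≤ K₀ := by
  obtain ⟨M₀, hM₀⟩ := H.isSol.2.1
  obtain ⟨k⟩ := ‹Nonempty W›
  refine ⟨|M₀| + ‖xL k‖, fun e he => H.excess_le_of_window e le_rfl ?_⟩
  rintro (_ | i) t ht
  · simp only [excess]
    positivity
  · linarith [excess_some_le (xL := xL) (x := x) e he i t k, hM₀ t ht i, le_abs_self M₀]

theorem exists_excess_le_pow [Nonempty W] (H : ContainmentSetting m a h b xL hbar tstar x)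
    (hU : ULI (augmented a b)) (hA : AQSC (augmented a b)) :
    ∃ δ K₀ : ℝ, 0 < δ ∧ δ ≤ 1 ∧ ∀ r : ℕ, ∃ t₀, ∀ e : EuclideanSpace ℝ (Fin m), ‖e‖ ≤ 1 →
      ∀ jo t, t₀ ≤ t → excess xL x e jo t ≤ (1 - δ) ^ r * K₀ := by
  obtain ⟨ε, hε, tp, htp, hb, hQ⟩ := hA
  have hA' := weights_augmented H.weights H.gains
  obtain ⟨Lw, hLw⟩ := hA'.exists_integral_rowSum_le_of_tpBounded htp hb
  obtain ⟨Uh, hUh⟩ := hA'.exists_integral_rowSum_le_of_ULI hU H.hbar_nonneg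
  obtain ⟨K₀, hK₀⟩ := H.exists_excess_le
  set N := Fintype.card V
  set P := max (N * (Uh + 2 * Lw) + Uh) 0
  set γ := min ε 1 * Real.exp (-P) ^ 2
  have hγ0 : 0 < γ := by positivity
  have hγ1 : γ ≤ 1 := mul_le_one₀ (min_le_right _ _) (by positivity)
    (pow_le_one₀ (Real.exp_pos _).le (Real.exp_le_one_iff.2 (by simp [P])))
  have hround : ∀ r : ℕ, ∃ t₀, max tstar (tp 0) ≤ t₀ ∧ ∀ e : EuclideanSpace ℝ (Fin m), ‖e‖ ≤ 1 →
      ∀ jo t, t₀ - hbar ≤ t → excess xL x e jo t ≤ (1 - γ ^ N) ^ r * K₀ := by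
    intro r
    induction r with
    | zero => exact ⟨_, le_rfl, fun e he jo t ht => by
        simpa using hK₀ e he jo t (by linarith [le_max_left tstar (tp 0)])⟩
    | succ r ih =>
      obtain ⟨t₀, ht₀, hr⟩ := ih
      obtain ⟨T, rfl, hT, hPT⟩ := htp.exists_schedule H.hbar_nonneg
        (fun io s hs => hA'.rowSum_nonneg io hs)
        (fun io t₁ t₂ h₁ h₂ => hA'.intervalIntegrable_rowSum io h₁ h₂) hLw hUh N
        ((le_max_right _ _).trans ht₀)
      refine ⟨T N + hbar, ?_, fun e he jo t ht => ?_⟩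
      · linarith [hT.monotone htp.1.monotone H.hbar_nonneg N.zero_le, H.hbar_nonneg]
      · refine (H.excess_contraction e (P := P) hε htp.1.monotone hQ hT
          ((le_max_left _ _).trans ht₀) (fun io => (hPT io).trans (le_max_left _ _)) (hr e he)
          jo t (by linarith)).trans_eq ?_
        ring
  refine ⟨γ ^ N, K₀, pow_pos hγ0 N, pow_le_one₀ hγ0.le hγ1, fun r => ?_⟩
  obtain ⟨t₀, -, hr⟩ := hround r
  exact ⟨t₀ - hbar, hr⟩

end ContainmentSetting

end Containment

theorem stmt15 [Nonempty W]
    (a : V → V → ℝ → ℝ) (hW : Weights a)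
    (b : V → W → ℝ → ℝ) (hB : BGains b)
    (hU : ULI (Ahat a (fun i t => ∑ k : W, b i k t)))
    (hA : AQSC (Ahat a (fun i t => ∑ k : W, b i k t))) :
    ∀ hbar ≥ (0:ℝ), ∀ h : V → V → ℝ → ℝ, Delays h hbar →
      ∀ m : ℕ, 1 ≤ m → ∀ xL : W → EuclideanSpace ℝ (Fin m),
        ∀ tstar ≥ (0:ℝ), ∀ x : ℝ → V → EuclideanSpace ℝ (Fin m),
          IsSolCont m a h b xL hbar tstar x →
          ∀ i : V, Tendsto (fun t => Metric.infDist (x t i) (convexHull ℝ (Set.range xL)))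
            atTop (𝓝 0) := by
  intro hbar hbar0 h hD m _ xL tstar htstar x hsol i
  obtain ⟨δ, K₀, hδ0, hδ1, hx⟩ :=
    (ContainmentSetting.mk hW hB hD hbar0 htstar hsol).exists_excess_le_pow hU hA
  exact tendsto_infDist_convexHull_of_excess_le i hδ0 hδ1 fun r =>
    (hx r).imp fun _ h e he => h e he (some i)
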